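/- arXiv:1103.1468 — 4 statements merged into one kernel-verified Lean document; each statement's English description precedes it below -/
import Mathlib

section
/- Let P¹ and P² be two orthogonal 2-dimensional planes in ℝ⁴ (i.e. every vector of P¹ is orthogonal to every vector of P²), and let p¹, p² denote the orthogonal projections onto them, extended to linear maps ∧₂p^i on 2-vectors. Then for every unit simple 2-vector ξ ∈ ∧₂ℝ⁴, |p¹(ξ)| + |p²(ξ)| ≤ 1. -/
/-!
Since `|a ∧ b| ≤ ‖a‖ ‖b‖`, it suffices to bound `‖p¹x‖ ‖p¹y‖ + ‖p²x‖ ‖p²y‖`. As the planes are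
orthogonal, Bessel's inequality gives `‖p¹x‖² + ‖p²x‖² ≤ 1` and likewise for `y`, and then
`2st ≤ s² + t²` bounds the sum by `1`.
-/

open Metric MeasureTheory Submodule
open scoped ENNReal NNReal

/-- The norm `|x ∧ y|` of the simple 2-vector `x ∧ y` in a real inner product space,
given by the area of the parallelogram spanned by `x` and `y`. -/
noncomputable def wedgeNorm {V : Type*} [NormedAddCommGroup V] [InnerProductSpace ℝ V]
    (x y : V) : ℝ :=
  Real.sqrt (‖x‖ ^ 2 * ‖y‖ ^ 2 - (inner ℝ x y : ℝ) ^ 2)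

theorem wedgeNorm_le_norm_mul_norm {V : Type*} [NormedAddCommGroup V] [InnerProductSpace ℝ V]
    (x y : V) : wedgeNorm x y ≤ ‖x‖ * ‖y‖ :=
  Real.sqrt_le_iff.mpr ⟨by positivity, by rw [mul_pow]; exact sub_le_self _ (sq_nonneg _)⟩

theorem Submodule.IsOrtho.norm_sq_starProjection_add_norm_sq_starProjection_le
    {𝕜 E : Type*} [RCLike 𝕜] [NormedAddCommGroup E] [InnerProductSpace 𝕜 E]
    {U V : Submodule 𝕜 E} [U.HasOrthogonalProjection] [V.HasOrthogonalProjection]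
    (h : U ⟂ V) (x : E) :
    ‖U.starProjection x‖ ^ 2 + ‖V.starProjection x‖ ^ 2 ≤ ‖x‖ ^ 2 := by
  have hV : V.starProjection x = V.starProjection (Uᗮ.starProjection x) := by
    conv_lhs => rw [← U.starProjection_add_starProjection_orthogonal x]
    rw [map_add, ← ContinuousLinearMap.comp_apply, h.symm.starProjection_comp_starProjection,
      zero_apply, zero_add]
  rw [U.norm_sq_eq_add_norm_sq_starProjection x, hV]
  gcongr
  exact V.norm_starProjection_apply_le _

theorem sum_proj_le_one_of_orthogonal_planes_general
    (P1 P2 : Submodule ℝ (EuclideanSpace ℝ (Fin 4)))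
    (horth : ∀ v ∈ P1, ∀ w ∈ P2, (inner ℝ v w : ℝ) = 0)
    (x y : EuclideanSpace ℝ (Fin 4))
    (hx : ‖x‖ = 1) (hy : ‖y‖ = 1) :
    wedgeNorm ((orthogonalProjection P1 x : EuclideanSpace ℝ (Fin 4)))
        ((orthogonalProjection P1 y : EuclideanSpace ℝ (Fin 4)))
      + wedgeNorm ((orthogonalProjection P2 x : EuclideanSpace ℝ (Fin 4)))
        ((orthogonalProjection P2 y : EuclideanSpace ℝ (Fin 4))) ≤ 1 := by
  simp only [orthogonalProjection, ← starProjection_apply]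
  have hP : P1 ⟂ P2 := isOrtho_iff_inner_eq.mpr horth
  have hX := hP.norm_sq_starProjection_add_norm_sq_starProjection_le x
  have hY := hP.norm_sq_starProjection_add_norm_sq_starProjection_le y
  rw [hx] at hX
  rw [hy] at hY
  calc _ ≤ ‖P1.starProjection x‖ * ‖P1.starProjection y‖
          + ‖P2.starProjection x‖ * ‖P2.starProjection y‖ :=
        add_le_add (wedgeNorm_le_norm_mul_norm _ _) (wedgeNorm_le_norm_mul_norm _ _)
    _ ≤ 1 := by
        linarith [two_mul_le_add_sq ‖P1.starProjection x‖ ‖P1.starProjection y‖,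
          two_mul_le_add_sq ‖P2.starProjection x‖ ‖P2.starProjection y‖]

/-- If `P¹, P²` are two orthogonal 2-dimensional planes in `ℝ⁴` and `p¹, p²` the orthogonal
projections onto them, then for every unit simple 2-vector `ξ = x ∧ y` (with `x, y`
orthonormal), `|∧₂p¹(ξ)| + |∧₂p²(ξ)| ≤ 1`. -/
theorem sum_proj_le_one_of_orthogonal_planes
    (P1 P2 : Submodule ℝ (EuclideanSpace ℝ (Fin 4)))
    (h1 : Module.finrank ℝ P1 = 2) (h2 : Module.finrank ℝ P2 = 2)
    (horth : ∀ v ∈ P1, ∀ w ∈ P2, (inner ℝ v w : ℝ) = 0)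
    (x y : EuclideanSpace ℝ (Fin 4))
    (hx : ‖x‖ = 1) (hy : ‖y‖ = 1) (hxy : (inner ℝ x y : ℝ) = 0) :
    wedgeNorm ((orthogonalProjection P1 x : EuclideanSpace ℝ (Fin 4)))
        ((orthogonalProjection P1 y : EuclideanSpace ℝ (Fin 4)))
      + wedgeNorm ((orthogonalProjection P2 x : EuclideanSpace ℝ (Fin 4)))
        ((orthogonalProjection P2 y : EuclideanSpace ℝ (Fin 4))) ≤ 1 :=
  sum_proj_le_one_of_orthogonal_planes_general P1 P2 horth x y hx hy
end

section
/- Let e₁,e₂,e₃,e₄ be an orthonormal basis of ℝ⁴, P¹ the plane spanned by e₁,e₂ and P² the plane spanned by e₃,e₄. If x, y are orthonormal vectors in ℝ⁴ such that the unit simple 2-vector x ∧ y satisfies |p¹(x∧y)| + |p²(x∧y)| = 1 (where p^i are the orthogonal projections on P^i acting on 2-vectors), then there exist an angle α ∈ [0, π/2] and unit vectors v₁,v₂ ∈ P¹, u₁,u₂ ∈ P² with v₁ ⊥ v₂ and u₁ ⊥ u₂ such that x = cos α · v₁ + sin α · u₁ and y = cos α · v₂ + sin α · u₂. -/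
open Metric MeasureTheory Submodule Real
open scoped ENNReal NNReal

open scoped RealInnerProductSpace

/-
Split `x = a + b`, `y = c + d` along `P¹ ⊕ P²`, where `P² = (P¹)ᗮ`. Pythagoras gives
`|b|² = 1 - |a|²`, `|d|² = 1 - |c|²` and `⟪b, d⟫ = -⟪a, c⟫`, so the hypothesis becomes
`√(AC - s²) + √((1 - A)(1 - C) - s²) = 1` with `A = |a|²`, `C = |c|²`, `s = ⟪a, c⟫`.
Squaring twice turns this into `(A - C)² + 4s² = 0`: hence `a ⊥ c` with `|a| = |c| = cos α`,
and then `b ⊥ d` with `|b| = |d| = sin α`. Normalising the four components gives `v₁, v₂, u₁, u₂`.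
-/

theorem OrthonormalBasis.orthogonal_span_image {ι 𝕜 E : Type*} [Fintype ι] [RCLike 𝕜]
    [NormedAddCommGroup E] [InnerProductSpace 𝕜 E] (b : OrthonormalBasis ι 𝕜 E) (s : Set ι) :
    (span 𝕜 (b '' s))ᗮ = span 𝕜 (b '' sᶜ) := by
  apply le_antisymm
  · intro w hw
    rw [← b.sum_repr' w]
    refine sum_mem fun i _ => ?_
    by_cases hi : i ∈ s
    · rw [inner_right_of_mem_orthogonal (subset_span (Set.mem_image_of_mem b hi)) hw, zero_smul]
      exact zero_mem _
    · exact smul_mem _ _ (subset_span (Set.mem_image_of_mem b hi))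
  · refine (isOrtho_span.mpr ?_).ge
    rintro _ ⟨i, hi, rfl⟩ _ ⟨j, hj, rfl⟩
    exact b.orthonormal.2 fun hij => hj (hij ▸ hi)

lemma OrthonormalBasis.orthogonal_span_pair_fin_four {𝕜 E : Type*} [RCLike 𝕜]
    [NormedAddCommGroup E] [InnerProductSpace 𝕜 E] (b : OrthonormalBasis (Fin 4) 𝕜 E) :
    (span 𝕜 {b 0, b 1})ᗮ = span 𝕜 {b 2, b 3} := by
  have hcompl : ({0, 1}ᶜ : Set (Fin 4)) = {2, 3} := by
    ext i; fin_cases i <;> simp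
  rw [← Set.image_pair, b.orthogonal_span_image, hcompl, Set.image_pair]

lemma sq_sub_add_sq_eq_zero_of_sqrt_add_sqrt_eq_one {A C s : ℝ} (h₁ : 0 ≤ A * C - s ^ 2)
    (h₂ : 0 ≤ (1 - A) * (1 - C) - s ^ 2)
    (h : √(A * C - s ^ 2) + √((1 - A) * (1 - C) - s ^ 2) = 1) :
    (A - C) ^ 2 + 4 * s ^ 2 = 0 := by
  set p := √(A * C - s ^ 2)
  set q := √((1 - A) * (1 - C) - s ^ 2)
  have hp : p ^ 2 = A * C - s ^ 2 := sq_sqrt h₁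
  have hq : q ^ 2 = (1 - A) * (1 - C) - s ^ 2 := sq_sqrt h₂
  have h2pq : 1 - p ^ 2 - q ^ 2 = 2 * (p * q) := by linear_combination (-(p + q + 1)) * h
  have hsq : (1 - p ^ 2 - q ^ 2) ^ 2 = 4 * p ^ 2 * q ^ 2 := by rw [h2pq]; ring
  rw [hp, hq] at hsq
  linear_combination hsq

lemma exists_mem_Icc_cos_eq_sin_eq {r t : ℝ} (hr : 0 ≤ r) (ht : 0 ≤ t) (h : r ^ 2 + t ^ 2 = 1) :
    ∃ α ∈ Set.Icc (0 : ℝ) (π / 2), cos α = r ∧ sin α = t := by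
  have hr1 : r ≤ 1 := by nlinarith
  refine ⟨arccos r, ⟨arccos_nonneg r, arccos_le_pi_div_two.mpr hr⟩,
    cos_arccos (by linarith) hr1, ?_⟩
  rw [sin_arccos, ← h, add_sub_cancel_left, sqrt_sq ht]

section
variable {E : Type*} [NormedAddCommGroup E] [InnerProductSpace ℝ E]

lemma sq_real_inner_le_norm_sq_mul_norm_sq (x y : E) : ⟪x, y⟫ ^ 2 ≤ ‖x‖ ^ 2 * ‖y‖ ^ 2 := by
  rw [← mul_pow, ← sq_abs]
  exact pow_le_pow_left₀ (abs_nonneg _) (abs_real_inner_le_norm x y) 2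

lemma exists_orthonormal_smul_eq_of_norm_eq_of_inner_eq_zero {P : Submodule ℝ E} {e f a c : E}
    (he : ‖e‖ = 1) (hf : ‖f‖ = 1) (hef : ⟪e, f⟫ = 0) (heP : e ∈ P) (hfP : f ∈ P)
    (haP : a ∈ P) (hcP : c ∈ P) (hca : ‖c‖ = ‖a‖) (hac : ⟪a, c⟫ = 0) :
    ∃ v₁ v₂, ‖v₁‖ = 1 ∧ ‖v₂‖ = 1 ∧ v₁ ∈ P ∧ v₂ ∈ P ∧ ⟪v₁, v₂⟫ = 0 ∧
      a = ‖a‖ • v₁ ∧ c = ‖a‖ • v₂ := by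
  rcases eq_or_ne a 0 with rfl | ha
  · have hc : c = 0 := by simpa using hca
    exact ⟨e, f, he, hf, heP, hfP, hef, by simp, by simp [hc]⟩
  have hr : ‖a‖ ≠ 0 := norm_ne_zero_iff.mpr ha
  refine ⟨‖a‖⁻¹ • a, ‖a‖⁻¹ • c, ?_, ?_, P.smul_mem _ haP, P.smul_mem _ hcP, ?_, ?_, ?_⟩
  · rw [norm_smul, norm_inv, norm_norm, inv_mul_cancel₀ hr]
  · rw [norm_smul, norm_inv, norm_norm, hca, inv_mul_cancel₀ hr]
  · rw [real_inner_smul_left, real_inner_smul_right, hac, mul_zero, mul_zero]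
  · rw [smul_inv_smul₀ hr]
  · rw [smul_inv_smul₀ hr]

namespace Submodule

variable (K : Submodule ℝ E) [K.HasOrthogonalProjection]

lemma inner_eq_inner_starProjection_add_inner_starProjection_orthogonal (x y : E) :
    ⟪x, y⟫ = ⟪K.starProjection x, K.starProjection y⟫ +
      ⟪Kᗮ.starProjection x, Kᗮ.starProjection y⟫ := by
  have cross (u v : E) : ⟪K.starProjection u, Kᗮ.starProjection v⟫ = 0 :=
    inner_right_of_mem_orthogonal (K.starProjection_apply_mem u) (Kᗮ.starProjection_apply_mem v)
  conv_lhs => rw [← K.starProjection_add_starProjection_orthogonal x,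
    ← K.starProjection_add_starProjection_orthogonal y]
  rw [inner_add_left, inner_add_right, inner_add_right, cross,
    real_inner_comm (K.starProjection y) (Kᗮ.starProjection x), cross, add_zero, zero_add]

lemma norm_eq_and_inner_eq_zero_of_wedgeNorm_add_eq_one {x y : E}
    (hx : ‖x‖ = 1) (hy : ‖y‖ = 1) (hxy : ⟪x, y⟫ = 0)
    (h : wedgeNorm (K.starProjection x) (K.starProjection y) +
      wedgeNorm (Kᗮ.starProjection x) (Kᗮ.starProjection y) = 1) :
    (‖K.starProjection y‖ = ‖K.starProjection x‖ ∧ ⟪K.starProjection x, K.starProjection y⟫ = 0) ∧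
      (‖Kᗮ.starProjection y‖ = ‖Kᗮ.starProjection x‖ ∧
        ⟪Kᗮ.starProjection x, Kᗮ.starProjection y⟫ = 0) := by
  have hxn := K.norm_sq_eq_add_norm_sq_starProjection x
  have hyn := K.norm_sq_eq_add_norm_sq_starProjection y
  have hinner := K.inner_eq_inner_starProjection_add_inner_starProjection_orthogonal x y
  set a := K.starProjection x
  set c := K.starProjection y
  set b := Kᗮ.starProjection x
  set d := Kᗮ.starProjection y
  rw [hx, one_pow] at hxn
  rw [hy, one_pow] at hyn
  have hb : ‖b‖ ^ 2 = 1 - ‖a‖ ^ 2 := by linarith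
  have hd : ‖d‖ ^ 2 = 1 - ‖c‖ ^ 2 := by linarith
  have hbd : ⟪b, d⟫ = -⟪a, c⟫ := by linarith
  have hkey := sq_sub_add_sq_eq_zero_of_sqrt_add_sqrt_eq_one
    (sub_nonneg.mpr (sq_real_inner_le_norm_sq_mul_norm_sq a c))
    (by simpa [hb, hd, hbd] using sq_real_inner_le_norm_sq_mul_norm_sq b d)
    (by simpa [wedgeNorm, hb, hd, hbd] using h)
  have hac : ⟪a, c⟫ = 0 := by nlinarith
  have hca : ‖c‖ ^ 2 = ‖a‖ ^ 2 := by nlinarith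
  refine ⟨⟨?_, hac⟩, ?_, by rw [hbd, hac, neg_zero]⟩
  · exact (sq_eq_sq₀ (norm_nonneg _) (norm_nonneg _)).mp hca
  · exact (sq_eq_sq₀ (norm_nonneg _) (norm_nonneg _)).mp (by rw [hb, hd, hca])

end Submodule

end

/-- Equality case of Wirtinger's inequality: if `x ∧ y` is a unit simple 2-vector
(with `x, y` orthonormal) whose projections onto the two orthogonal coordinate planes
`P¹ = span(e₁,e₂)` and `P² = span(e₃,e₄)` satisfy `|p¹(x∧y)| + |p²(x∧y)| = 1`, then
there are an angle `α ∈ [0, π/2]` and orthonormal pairs `v₁ ⊥ v₂` in `P¹`, `u₁ ⊥ u₂` in `P²`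
with `x = cos α v₁ + sin α u₁` and `y = cos α v₂ + sin α u₂`. -/
theorem wirtinger_equality_case
    (b : OrthonormalBasis (Fin 4) ℝ (EuclideanSpace ℝ (Fin 4)))
    (P1 P2 : Submodule ℝ (EuclideanSpace ℝ (Fin 4)))
    (hP1 : P1 = Submodule.span ℝ {b 0, b 1})
    (hP2 : P2 = Submodule.span ℝ {b 2, b 3})
    (x y : EuclideanSpace ℝ (Fin 4))
    (hx : ‖x‖ = 1) (hy : ‖y‖ = 1) (hxy : (inner ℝ x y : ℝ) = 0)
    (heq : wedgeNorm ((orthogonalProjectionOnto P1 x : EuclideanSpace ℝ (Fin 4)))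
        ((orthogonalProjectionOnto P1 y : EuclideanSpace ℝ (Fin 4)))
      + wedgeNorm ((orthogonalProjectionOnto P2 x : EuclideanSpace ℝ (Fin 4)))
        ((orthogonalProjectionOnto P2 y : EuclideanSpace ℝ (Fin 4))) = 1) :
    ∃ α ∈ Set.Icc (0 : ℝ) (π / 2), ∃ v1 v2 u1 u2 : EuclideanSpace ℝ (Fin 4),
      ‖v1‖ = 1 ∧ ‖v2‖ = 1 ∧ ‖u1‖ = 1 ∧ ‖u2‖ = 1 ∧
      v1 ∈ P1 ∧ v2 ∈ P1 ∧ u1 ∈ P2 ∧ u2 ∈ P2 ∧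
      (inner ℝ v1 v2 : ℝ) = 0 ∧ (inner ℝ u1 u2 : ℝ) = 0 ∧
      x = Real.cos α • v1 + Real.sin α • u1 ∧
      y = Real.cos α • v2 + Real.sin α • u2 := by
  have hb0 : b 0 ∈ P1 := hP1 ▸ subset_span (by simp)
  have hb1 : b 1 ∈ P1 := hP1 ▸ subset_span (by simp)
  have hb2 : b 2 ∈ P2 := hP2 ▸ subset_span (by simp)
  have hb3 : b 3 ∈ P2 := hP2 ▸ subset_span (by simp)
  have hP2' : P2 = P1ᗮ := by rw [hP1, hP2, b.orthogonal_span_pair_fin_four]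
  subst hP2'
  simp only [coe_orthogonalProjectionOnto_apply] at heq
  obtain ⟨⟨hca, hac⟩, hdb, hbd⟩ :=
    P1.norm_eq_and_inner_eq_zero_of_wedgeNorm_add_eq_one hx hy hxy heq
  obtain ⟨α, hα, hcos, hsin⟩ := exists_mem_Icc_cos_eq_sin_eq (norm_nonneg _) (norm_nonneg _)
    (by rw [← P1.norm_sq_eq_add_norm_sq_starProjection x, hx, one_pow])
  obtain ⟨v1, v2, hv1, hv2, hv1P, hv2P, hv12, hxv, hyv⟩ :=
    exists_orthonormal_smul_eq_of_norm_eq_of_inner_eq_zero (b.orthonormal.1 0)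
      (b.orthonormal.1 1) (b.orthonormal.2 (by decide)) hb0 hb1
      (P1.starProjection_apply_mem x) (P1.starProjection_apply_mem y) hca hac
  obtain ⟨u1, u2, hu1, hu2, hu1P, hu2P, hu12, hxu, hyu⟩ :=
    exists_orthonormal_smul_eq_of_norm_eq_of_inner_eq_zero (b.orthonormal.1 2)
      (b.orthonormal.1 3) (b.orthonormal.2 (by decide)) hb2 hb3
      (P1ᗮ.starProjection_apply_mem x) (P1ᗮ.starProjection_apply_mem y) hdb hbd
  refine ⟨α, hα, v1, v2, u1, u2, hv1, hv2, hu1, hu2, hv1P, hv2P, hu1P, hu2P, hv12, hu12, ?_, ?_⟩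
  · rw [hcos, hsin, ← hxv, ← hxu, P1.starProjection_add_starProjection_orthogonal]
  · rw [hcos, hsin, ← hyv, ← hyu, P1.starProjection_add_starProjection_orthogonal]
end

section
/- Let P be a 2-dimensional plane through the origin in ℝ⁴, p the orthogonal projection on P, and φ : ℝ⁴ → ℝ⁴ a Lipschitz (in particular continuous) map such that φ(x) = x for all x ∈ P with ‖x‖ ≥ 1. Then p(φ(P ∩ closedBall(0,1))) ⊇ P ∩ closedBall(0,1). -/
/-!
Identify `P` isometrically with `ℂ` and let `F = p ∘ φ` on the closed unit disk, so that `F` is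
continuous and fixes the unit circle. If some `w` with `‖w‖ < 1` were not a value of `F`, the
disk being simply connected, `F - w` would have a continuous logarithm `G`. Along the circle
`t ↦ exp (2πit)` the loop `G` closes up, whereas every continuous logarithm of
`exp (2πit) - w` increases by `2πi` over `[0, 1]`; two logarithms of the same function differ
by a constant, a contradiction.
-/

open Metric Set Submodule
open scoped NNReal Real

namespace Complex

theorem exists_continuous_exp_eq {A : Type*} [TopologicalSpace A] [SimplyConnectedSpace A]
    [LocallyPathConnectedSpace A] (f : C(A, ℂ)) (hf : ∀ a, f a ≠ 0) :
    ∃ G : C(A, ℂ), ∀ a, exp (G a) = f a := by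
  obtain ⟨a₀⟩ := (inferInstance : Nonempty A)
  obtain ⟨G, ⟨-, hG⟩, -⟩ := isCoveringMapOn_exp.existsUnique_continuousMap_lifts f
    (exp_log (hf a₀)) hf
  exact ⟨G, congrFun hG⟩

theorem sub_eq_sub_of_exp_eq {X : Type*} [TopologicalSpace X] [PreconnectedSpace X]
    {G₁ G₂ : X → ℂ} (h₁ : Continuous G₁) (h₂ : Continuous G₂)
    (h : ∀ x, exp (G₁ x) = exp (G₂ x)) (x y : X) :
    G₁ x - G₂ x = G₁ y - G₂ y := by
  have hshift : exp (G₁ x - G₂ x) = 1 := by rw [exp_sub, h, div_self (exp_ne_zero _)]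
  have hlift := isCoveringMap_exp.eq_of_comp_eq h₁ (h₂.add_const (G₁ x - G₂ x))
    (funext fun z => by simp [exp_add, hshift, h]) x (by ring)
  rw [congrFun hlift y]
  ring

theorem exists_log_circle_sub {w : ℂ} (hw : ‖w‖ < 1) :
    ∃ L : ℝ → ℂ, Continuous L ∧ (∀ t : ℝ, exp (L t) = exp (2 * π * I * t) - w) ∧
      L 1 - L 0 = 2 * π * I := by
  have hslit : ∀ t : ℝ, 1 - w * exp (-(2 * π * I * t)) ∈ slitPlane := fun t => by
    apply ball_one_subset_slitPlane
    rw [mem_ball, dist_eq_norm, sub_sub_cancel_left, norm_neg, norm_mul, norm_exp]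
    simpa using hw
  refine ⟨fun t => 2 * π * I * t + log (1 - w * exp (-(2 * π * I * t))), ?_, fun t => ?_, ?_⟩
  · exact (by fun_prop : Continuous fun t : ℝ => 2 * π * I * t).add
      ((by fun_prop : Continuous fun t : ℝ => 1 - w * exp (-(2 * π * I * t))).clog hslit)
  · rw [exp_add, exp_log (slitPlane_ne_zero (hslit t)), mul_sub, mul_one, mul_left_comm,
      ← exp_add, add_neg_cancel, exp_zero, mul_one]
  · simp [exp_neg]

theorem exists_zero_of_eqOn_sphere_sub {F : ℂ → ℂ} (hF : ContinuousOn F (closedBall 0 1))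
    {w : ℂ} (hw : ‖w‖ < 1) (hFw : ∀ z ∈ sphere (0 : ℂ) 1, F z = z - w) :
    ∃ z ∈ closedBall (0 : ℂ) 1, F z = 0 := by
  by_contra! hne
  have : ContractibleSpace (closedBall (0 : ℂ) 1) :=
    (convex_closedBall 0 1).contractibleSpace ⟨0, mem_closedBall_self zero_le_one⟩
  have := (convex_closedBall (0 : ℂ) 1).locallyPathConnectedSpace
  obtain ⟨G, hG⟩ := exists_continuous_exp_eq ⟨_, hF.domRestrict⟩ fun z => hne z z.2
  obtain ⟨L, hLc, hL, hL1⟩ := exists_log_circle_sub hw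
  let c : ℝ → closedBall (0 : ℂ) 1 := fun t => ⟨exp (2 * π * I * t), by simp [norm_exp]⟩
  have hc : Continuous c := by fun_prop
  have hGc : ∀ t, exp (G (c t)) = exp (L t) := fun t => by
    rw [hG, hL]
    exact hFw _ (by simp [c, norm_exp])
  have hwind := sub_eq_sub_of_exp_eq (G.continuous.comp hc) hLc hGc 1 0
  have hc1 : c 1 = c 0 := by simp [c]
  simp only [Function.comp_apply, hc1] at hwind
  have : (2 * π * I : ℂ) = 0 := by linear_combination -hL1 - hwind
  simp [Real.pi_ne_zero] at this

theorem closedBall_subset_image_of_eqOn_sphere {F : ℂ → ℂ}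
    (hF : ContinuousOn F (closedBall 0 1)) (hFs : EqOn F id (sphere 0 1)) :
    closedBall 0 1 ⊆ F '' closedBall 0 1 := by
  intro w hw
  rw [mem_closedBall_zero_iff] at hw
  rcases hw.eq_or_lt with hw | hw
  · exact ⟨w, mem_closedBall_zero_iff.2 hw.le, hFs (mem_sphere_zero_iff_norm.2 hw)⟩
  obtain ⟨z, hz, hFz⟩ := exists_zero_of_eqOn_sphere_sub (F := fun z => F z - w)
    (hF.sub continuousOn_const) hw fun z hz => by rw [hFs hz, id]
  exact ⟨z, hz, sub_eq_zero.1 hFz⟩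

end Complex

theorem closedBall_subset_image_of_eqOn_sphere {E : Type*} [NormedAddCommGroup E]
    [InnerProductSpace ℝ E] (hE : Module.finrank ℝ E = 2) {F : E → E}
    (hF : ContinuousOn F (closedBall 0 1)) (hFs : EqOn F id (sphere 0 1)) :
    closedBall 0 1 ⊆ F '' closedBall 0 1 := by
  have : FiniteDimensional ℝ E := .of_finrank_eq_succ hE
  let e : E ≃ₗᵢ[ℝ] ℂ := ((stdOrthonormalBasis ℝ E).reindex (finCongr hE)).repr.trans
    Complex.orthonormalBasisOneI.repr.symm
  have hF' := Complex.closedBall_subset_image_of_eqOn_sphere (F := e ∘ F ∘ e.symm)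
    (e.continuous.comp_continuousOn (hF.comp e.symm.continuous.continuousOn fun z hz => by
      simpa using hz)) fun z hz => by simp [hFs (show e.symm z ∈ sphere 0 1 by simpa using hz)]
  intro x hx
  obtain ⟨z, hz, hFz⟩ := hF' (show e x ∈ closedBall 0 1 by simpa using hx)
  exact ⟨e.symm z, by simpa using hz, e.injective hFz⟩

/-- If `P` is a 2-plane through the origin in `ℝ⁴`, `p` the orthogonal projection onto `P`,
and `φ` a Lipschitz map fixing every point of `P` of norm at least 1, then
`p(φ(P ∩ closedBall(0,1))) ⊇ P ∩ closedBall(0,1)`. -/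
theorem proj_image_contains_disk
    (P : Submodule ℝ (EuclideanSpace ℝ (Fin 4))) (hP : Module.finrank ℝ P = 2)
    (φ : EuclideanSpace ℝ (Fin 4) → EuclideanSpace ℝ (Fin 4))
    (K : ℝ≥0) (hφ : LipschitzWith K φ)
    (hid : ∀ x ∈ P, 1 ≤ ‖x‖ → φ x = x) :
    (P : Set (EuclideanSpace ℝ (Fin 4))) ∩ closedBall 0 1 ⊆
      (fun v => (orthogonalProjection P v : EuclideanSpace ℝ (Fin 4))) ''
        (φ '' ((P : Set (EuclideanSpace ℝ (Fin 4))) ∩ closedBall 0 1)) := by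
  let F : P → P := fun x => orthogonalProjectionOnto P (φ x)
  have hF : Continuous F := (orthogonalProjectionOnto P).continuous.comp
    (hφ.continuous.comp continuous_subtype_val)
  have hFs : EqOn F id (sphere 0 1) := fun x hx => by
    simp only [F, hid x x.2 (mem_sphere_zero_iff_norm.1 hx).ge,
      orthogonalProjectionOnto_mem_subspace_eq_self, id]
  rintro y ⟨hyP, hy⟩
  obtain ⟨x, hx, hFx⟩ := closedBall_subset_image_of_eqOn_sphere hP hF.continuousOn hFs
    (show (⟨y, hyP⟩ : P) ∈ closedBall 0 1 by simpa using hy)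
  exact ⟨φ x, ⟨x, ⟨x.2, by simpa using hx⟩, rfl⟩, congrArg Subtype.val hFx⟩
end

section
/- For every 0 < ε < 1 there exists C = C(ε) > 100 such that: if 0 < r₀ < 1, δ > 0, and u ∈ C¹(B(0,1) \ B(0,r₀), ℝ) satisfies u > δ r₀ − δ r₀/C on ∂B(0,r₀) and u < δ r₀ / C on ∂B(0,1), then ∫_{B(0,1)\B(0,r₀)} |∇u|² ≥ ε · 2π δ² r₀² / |log r₀|. -/
/-!
Along every ray `t ↦ t c` (`‖c‖ = 1`) the boundary conditions force `u` to drop by at least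
`m = δ r₀ (1 - 2 / C)` between the two circles. Cauchy–Schwarz with weight `t` turns this drop
into `∫ t ‖Du(t c)‖² dt ≥ m² / log (1 / r₀)`, which is the energy per unit angle of the radial
harmonic function `m log ‖x‖ / log r₀`. Integrating over the angle in polar coordinates gives
`2π m² / |log r₀|`, and `C` is chosen so that `(1 - 2 / C)² ≥ ε`.
-/

open Metric MeasureTheory Real Complex
open scoped Real

section

variable {E F : Type*} [NormedAddCommGroup E] [NormedSpace ℝ E]
  [NormedAddCommGroup F] [NormedSpace ℝ F]

theorem uniqueDiffOn_closedBall_diff_ball {a b : ℝ} (ha : 0 < a) (hab : a < b) :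
    UniqueDiffOn ℝ (closedBall (0 : E) b \ ball 0 a) := by
  intro x hx
  have hxa : a ≤ ‖x‖ := by simpa using hx.2
  have hxb : ‖x‖ ≤ b := by simpa using hx.1
  have hx0 : 0 < ‖x‖ := ha.trans_le hxa
  -- `x` lies in a closed ball of radius `(b - a) / 2` centred on the middle circle
  set c : E := ((a + b) / 2 / ‖x‖) • x
  have hc : ‖c‖ = (a + b) / 2 := by
    rw [norm_smul, Real.norm_of_nonneg (div_nonneg (by linarith) hx0.le), div_mul_cancel₀ _ hx0.ne']
  have hxc : ‖x - c‖ = |‖x‖ - (a + b) / 2| := by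
    rw [show x - c = ((‖x‖ - (a + b) / 2) / ‖x‖) • x by
        rw [sub_div, div_self hx0.ne', sub_smul, one_smul],
      norm_smul, Real.norm_eq_abs, abs_div, abs_norm, div_mul_cancel₀ _ hx0.ne']
  have hsub : closedBall c ((b - a) / 2) ⊆ closedBall 0 b \ ball 0 a := by
    intro y hy
    rw [mem_closedBall, dist_eq_norm] at hy
    have h₁ := norm_le_norm_add_norm_sub' y c
    have h₂ := norm_sub_norm_le c y
    rw [norm_sub_rev] at h₂
    refine ⟨?_, ?_⟩ <;> simp only [mem_closedBall, mem_ball, dist_zero_right, not_lt] <;> linarith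
  have hxmem : x ∈ closedBall c ((b - a) / 2) := by
    rw [mem_closedBall, dist_eq_norm, hxc, abs_le]
    constructor <;> linarith
  refine (uniqueDiffWithinAt_convex (convex_closedBall c _) ?_ (subset_closure hxmem)).mono hsub
  rw [interior_closedBall c (by linarith)]
  exact ⟨c, mem_ball_self (by linarith)⟩

theorem ContDiffOn.exists_bound_norm_fderiv {u : E → F} {s : Set E} (hu : ContDiffOn ℝ 1 u s)
    (hs : IsCompact s) (hs' : UniqueDiffOn ℝ s) :
    ∃ M, ∀ x ∈ interior s, ‖fderiv ℝ u x‖ ≤ M := by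
  obtain ⟨M, hM⟩ := hs.exists_bound_of_continuousOn (hu.continuousOn_fderivWithin hs' le_rfl)
  refine ⟨M, fun x hx => ?_⟩
  rw [← fderivWithin_of_mem_nhds (mem_interior_iff_mem_nhds.1 hx)]
  exact hM x (interior_subset hx)

theorem sub_le_integral_norm_fderiv_smul {u : E → ℝ} {c : E} {a b : ℝ} (hab : a ≤ b)
    (hcont : ContinuousOn (fun t : ℝ => u (t • c)) (Set.Icc a b))
    (hdiff : ∀ t ∈ Set.Ioo a b, DifferentiableAt ℝ u (t • c))
    (hint : IntegrableOn (fun t : ℝ => ‖fderiv ℝ u (t • c)‖) (Set.Icc a b)) :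
    u (a • c) - u (b • c) ≤ (∫ t in a..b, ‖fderiv ℝ u (t • c)‖) * ‖c‖ := by
  rw [← intervalIntegral.integral_mul_const, ← neg_sub_neg]
  refine intervalIntegral.sub_le_integral_of_hasDeriv_right_of_le (g := fun t => -u (t • c))
    (g' := fun t => -fderiv ℝ u (t • c) c) hab hcont.neg
    (fun t ht => ?_) (hint.mul_const _) (fun t _ => ?_)
  · have := (hdiff t ht).hasFDerivAt.comp_hasDerivAt t ((hasDerivAt_id' t).smul_const c)
    rw [one_smul] at this
    exact this.neg.hasDerivWithinAt
  · exact (neg_le_abs _).trans (by simpa only [Real.norm_eq_abs] using (fderiv ℝ u _).le_opNorm c)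

theorem sq_intervalIntegral_div_log_le {g : ℝ → ℝ} {a b : ℝ} (ha : 0 < a) (hab : a ≤ b)
    (hg : IntervalIntegrable g volume a b)
    (hg2 : IntervalIntegrable (fun r => r * g r ^ 2) volume a b) :
    (∫ r in a..b, g r) ^ 2 / Real.log (b / a) ≤ ∫ r in a..b, r * g r ^ 2 := by
  set I := ∫ r in a..b, g r
  set L := Real.log (b / a)
  set l := I / L
  have hinv : IntervalIntegrable (fun r : ℝ => r⁻¹) volume a b :=
    intervalIntegral.intervalIntegrable_inv
      (fun r hr => (ha.trans_le (Set.uIcc_of_le hab ▸ hr).1).ne') continuousOn_id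
  -- AM-GM `2 l g ≤ r g² + l² / r`, with the optimal multiplier `l = I / L`
  have hpt : ∀ r ∈ Set.Icc a b, 2 * l * g r - l ^ 2 * r⁻¹ ≤ r * g r ^ 2 := by
    intro r hr
    have hr0 : 0 < r := ha.trans_le hr.1
    have : 0 ≤ (r * g r - l) ^ 2 / r := by positivity
    rw [sub_sq, mul_pow] at this
    field_simp at this ⊢
    linarith
  calc I ^ 2 / L = 2 * l * I - l ^ 2 * L := by
        rcases eq_or_ne L 0 with hL | hL
        · simp [l, hL]
        · simp only [l]; field_simp; ring
    _ = ∫ r in a..b, 2 * l * g r - l ^ 2 * r⁻¹ := by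
        rw [intervalIntegral.integral_sub (hg.const_mul _) (hinv.const_mul _),
          intervalIntegral.integral_const_mul, intervalIntegral.integral_const_mul,
          integral_inv_of_pos ha (ha.trans_le hab)]
    _ ≤ ∫ r in a..b, r * g r ^ 2 :=
        intervalIntegral.integral_mono_on hab ((hg.const_mul _).sub (hinv.const_mul _)) hg2 hpt

theorem exists_bound_norm_fderiv_of_contDiffOn_annulus [ProperSpace E] {u : E → F} {a b : ℝ}
    (ha : 0 < a) (hab : a < b) (hu : ContDiffOn ℝ 1 u (closedBall 0 b \ ball 0 a)) :
    ∃ M, ∀ x ∈ ball (0 : E) b \ closedBall 0 a, ‖fderiv ℝ u x‖ ≤ M := by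
  obtain ⟨M, hM⟩ := hu.exists_bound_norm_fderiv ((isCompact_closedBall 0 b).diff isOpen_ball)
    (uniqueDiffOn_closedBall_diff_ball ha hab)
  exact ⟨M, fun x hx => hM x <| interior_maximal
    (Set.sdiff_subset_sdiff ball_subset_closedBall ball_subset_closedBall)
    (isOpen_ball.sdiff isClosed_closedBall) hx⟩

theorem sq_div_log_le_integral_mul_sq_norm_fderiv_smul {u : E → ℝ} {c : E} {a b m M : ℝ}
    (ha : 0 < a) (hab : a ≤ b) (hc : ‖c‖ = 1) (hu : ContDiffOn ℝ 1 u (closedBall 0 b \ ball 0 a))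
    (hM : ∀ x ∈ ball (0 : E) b \ closedBall 0 a, ‖fderiv ℝ u x‖ ≤ M)
    (hm : 0 ≤ m) (hdrop : m ≤ u (a • c) - u (b • c)) :
    m ^ 2 / Real.log (b / a) ≤ ∫ t in Set.Ioo a b, t * ‖fderiv ℝ u (t • c)‖ ^ 2 := by
  have hnorm : ∀ t : ℝ, 0 < t → ‖t • c‖ = t := fun t ht => by
    rw [norm_smul, hc, mul_one, Real.norm_of_nonneg ht.le]
  have hIcc : ∀ t ∈ Set.Icc a b, t • c ∈ closedBall (0 : E) b \ ball 0 a := fun t ht => by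
    simp [hnorm t (ha.trans_le ht.1), ht.1, ht.2]
  have hIoo : ∀ t ∈ Set.Ioo a b, t • c ∈ ball (0 : E) b \ closedBall 0 a := fun t ht => by
    simp [hnorm t (ha.trans ht.1), ht.1, ht.2]
  have hopen : IsOpen (ball (0 : E) b \ closedBall 0 a) := isOpen_ball.sdiff isClosed_closedBall
  have hsub : ball (0 : E) b \ closedBall 0 a ⊆ closedBall 0 b \ ball 0 a :=
    Set.sdiff_subset_sdiff ball_subset_closedBall ball_subset_closedBall
  set g : ℝ → ℝ := fun t => ‖fderiv ℝ u (t • c)‖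
  have hg_cont : ContinuousOn g (Set.Ioo a b) :=
    (((hu.mono hsub).continuousOn_fderiv_of_isOpen hopen le_rfl).comp (by fun_prop) hIoo).norm
  have hg : IntegrableOn g (Set.Icc a b) := (integrableOn_Icc_iff_integrableOn_Ioo).2 <|
    .of_bound measure_Ioo_lt_top (hg_cont.aestronglyMeasurable measurableSet_Ioo) M
      ((ae_restrict_iff' measurableSet_Ioo).2 <| ae_of_all _ fun t ht => by
        simpa [g] using hM _ (hIoo t ht))
  have hg2 : IntegrableOn (fun t => t * g t ^ 2) (Set.Ioo a b) :=
    .of_bound measure_Ioo_lt_top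
      ((continuousOn_id.mul (hg_cont.pow 2)).aestronglyMeasurable measurableSet_Ioo) (b * M ^ 2)
      ((ae_restrict_iff' measurableSet_Ioo).2 <| ae_of_all _ fun t ht => by
        have ht0 : 0 < t := ha.trans ht.1
        rw [Real.norm_of_nonneg (by positivity)]
        exact mul_le_mul ht.2.le (pow_le_pow_left₀ (norm_nonneg _) (hM _ (hIoo t ht)) 2)
          (by positivity) ((ha.trans ht.1).trans ht.2).le)
  have hftc : m ≤ ∫ t in a..b, g t := by
    have := sub_le_integral_norm_fderiv_smul hab
      (hu.continuousOn.comp (by fun_prop) hIcc)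
      (fun t ht => (hu.contDiffAt (mem_nhds_iff.2 ⟨_, hsub, hopen, hIoo t ht⟩)).differentiableAt
        one_ne_zero) hg
    rw [hc, mul_one] at this
    exact hdrop.trans this
  have hlog : 0 ≤ Real.log (b / a) := Real.log_nonneg ((one_le_div ha).2 hab)
  calc m ^ 2 / Real.log (b / a) ≤ (∫ t in a..b, g t) ^ 2 / Real.log (b / a) := by
        gcongr
    _ ≤ ∫ t in a..b, t * g t ^ 2 :=
        sq_intervalIntegral_div_log_le ha hab
          ((intervalIntegrable_iff_integrableOn_Icc_of_le hab).2 hg)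
          ((intervalIntegrable_iff_integrableOn_Ioo_of_le hab).2 hg2)
    _ = ∫ t in Set.Ioo a b, t * g t ^ 2 := by
        rw [intervalIntegral.integral_of_le hab, integral_Ioc_eq_integral_Ioo]

end

theorem two_pi_mul_le_setIntegral_annulus {f : ℂ → ℝ} {a b K : ℝ} (ha : 0 ≤ a)
    (hf : Measurable f) (hf0 : 0 ≤ f) (hfi : IntegrableOn f (ball 0 b \ closedBall 0 a))
    (hK : ∀ θ ∈ Set.Ioo (-π) π, K ≤ ∫ r in Set.Ioo a b, r * f (r * Complex.exp (θ * I))) :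
    2 * π * K ≤ ∫ x in ball 0 b \ closedBall 0 a, f x := by
  set A : Set ℂ := ball 0 b \ closedBall 0 a
  set T : Set (ℝ × ℝ) := Set.Ioo a b ×ˢ Set.Ioo (-π) π
  set G : ℝ × ℝ → ENNReal := fun p => .ofReal (p.1 * f (p.1 * Complex.exp (p.2 * I)))
  have hG : Measurable G := by fun_prop
  have hA : MeasurableSet A := measurableSet_ball.diff measurableSet_closedBall
  have hT : MeasurableSet T := measurableSet_Ioo.prod measurableSet_Ioo
  have hTsub : T ⊆ polarCoord.target := by
    rw [polarCoord_target]
    exact Set.prod_mono (fun r hr => ha.trans_lt hr.1) le_rfl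
  have hpolar : ∫⁻ x in A, .ofReal (f x) = ∫⁻ p in T, G p := by
    rw [← lintegral_indicator hA, ← Complex.lintegral_comp_polarCoord_symm,
      ← Set.inter_eq_left.2 hTsub, ← Measure.restrict_restrict hT, ← lintegral_indicator hT]
    refine setLIntegral_congr_fun polarCoord.open_target.measurableSet fun p hp => ?_
    obtain ⟨hp1, hp2⟩ : 0 < p.1 ∧ p.2 ∈ Set.Ioo (-π) π := by rwa [polarCoord_target] at hp
    have hsymm : Complex.polarCoord.symm p = p.1 * Complex.exp (p.2 * I) := by
      rw [Complex.polarCoord_symm_apply, exp_mul_I, ← ofReal_cos, ← ofReal_sin]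
    have hmem : Complex.polarCoord.symm p ∈ A ↔ p ∈ T := by
      simp [A, T, hsymm, abs_of_pos hp1, hp2, and_comm]
    by_cases hpT : p ∈ T
    · rw [Set.indicator_of_mem (hmem.2 hpT), Set.indicator_of_mem hpT, smul_eq_mul,
        ← ENNReal.ofReal_mul hp1.le, hsymm]
    · rw [Set.indicator_of_notMem (mt hmem.1 hpT), Set.indicator_of_notMem hpT, smul_zero]
  have hray : ∀ θ ∈ Set.Ioo (-π) π, .ofReal K ≤ ∫⁻ r in Set.Ioo a b, G (r, θ) := by
    intro θ hθ
    refine (ENNReal.ofReal_le_ofReal (hK θ hθ)).trans ?_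
    rw [integral_eq_lintegral_of_nonneg_ae ?_ (by fun_prop)]
    · exact ENNReal.ofReal_toReal_le
    · filter_upwards [ae_restrict_mem measurableSet_Ioo] with r hr
      exact mul_nonneg (ha.trans hr.1.le) (hf0 _)
  have hlint : ENNReal.ofReal (2 * π * K) ≤ ∫⁻ x in A, .ofReal (f x) := by
    calc ENNReal.ofReal (2 * π * K) = ∫⁻ _ in Set.Ioo (-π) π, .ofReal K := by
          rw [setLIntegral_const, Real.volume_Ioo, ← ENNReal.ofReal_mul' (by linarith [pi_pos])]
          ring_nf
      _ ≤ ∫⁻ θ in Set.Ioo (-π) π, ∫⁻ r in Set.Ioo a b, G (r, θ) :=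
          setLIntegral_mono' measurableSet_Ioo hray
      _ = ∫⁻ x in A, .ofReal (f x) := by
          rw [hpolar, Measure.volume_eq_prod, setLIntegral_prod_symm _ hG.aemeasurable]
  rw [integral_eq_lintegral_of_nonneg_ae (ae_of_all _ hf0) hf.aestronglyMeasurable]
  exact (ENNReal.ofReal_le_iff_le_toReal hfi.lintegral_lt_top.ne).1 hlint

theorem two_pi_mul_sq_div_log_le_integral_norm_fderiv_sq {u : ℂ → ℝ} {a b α β : ℝ}
    (ha : 0 < a) (hab : a < b) (hu : ContDiffOn ℝ 1 u (closedBall 0 b \ ball 0 a))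
    (hin : ∀ x ∈ sphere (0 : ℂ) a, α ≤ u x) (hout : ∀ x ∈ sphere (0 : ℂ) b, u x ≤ β)
    (hβα : β ≤ α) :
    2 * π * ((α - β) ^ 2 / Real.log (b / a)) ≤ ∫ x in ball 0 b \ ball 0 a, ‖fderiv ℝ u x‖ ^ 2 := by
  obtain ⟨M, hM⟩ := exists_bound_norm_fderiv_of_contDiffOn_annulus ha hab hu
  have hray : ∀ θ ∈ Set.Ioo (-π) π, (α - β) ^ 2 / Real.log (b / a)
      ≤ ∫ r in Set.Ioo a b, r * ‖fderiv ℝ u (r * Complex.exp (θ * I))‖ ^ 2 := by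
    intro θ _
    have hc : ‖Complex.exp (θ * I)‖ = 1 := norm_exp_ofReal_mul_I θ
    have hsphere : ∀ r : ℝ, 0 < r → (r : ℂ) * Complex.exp (θ * I) ∈ sphere (0 : ℂ) r :=
      fun r hr => by simp [hc, abs_of_pos hr]
    simpa only [Complex.real_smul] using sq_div_log_le_integral_mul_sq_norm_fderiv_smul ha
      hab.le hc hu hM (sub_nonneg.2 hβα) <| by
        simp only [Complex.real_smul]
        linarith [hin _ (hsphere a ha), hout _ (hsphere b (ha.trans hab))]
  have hint : IntegrableOn (fun x => ‖fderiv ℝ u x‖ ^ 2) (ball (0 : ℂ) b \ closedBall 0 a) :=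
    Measure.integrableOn_of_bounded (M := M ^ 2)
      ((measure_mono Set.sdiff_subset).trans_lt measure_ball_lt_top).ne (by fun_prop)
      ((ae_restrict_iff' (measurableSet_ball.diff measurableSet_closedBall)).2 <| ae_of_all _
        fun x hx => by simpa using pow_le_pow_left₀ (norm_nonneg _) (hM x hx) 2)
  calc 2 * π * ((α - β) ^ 2 / Real.log (b / a))
      ≤ ∫ x in ball 0 b \ closedBall 0 a, ‖fderiv ℝ u x‖ ^ 2 :=
        two_pi_mul_le_setIntegral_annulus ha.le (by fun_prop) (fun x => by positivity) hint hray
    _ = ∫ x in ball 0 b \ ball 0 a, ‖fderiv ℝ u x‖ ^ 2 := by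
        refine setIntegral_congr_set ?_
        rw [← ball_union_sphere, ← Set.sdiff_sdiff]
        exact sdiff_null_ae_eq_self (Measure.addHaar_sphere volume 0 a)

theorem exists_gt_and_le_sq_one_sub_two_div (C₀ : ℝ) {ε : ℝ} (hε : ε < 1) :
    ∃ C, C₀ < C ∧ ε ≤ (1 - 2 / C) ^ 2 := by
  have h4 : 0 < 4 / (1 - ε) := div_pos four_pos (sub_pos.2 hε)
  refine ⟨max C₀ 0 + 1 + 4 / (1 - ε), by linarith [le_max_left C₀ 0], ?_⟩
  set C := max C₀ 0 + 1 + 4 / (1 - ε)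
  have hC : 4 / (1 - ε) ≤ C := by linarith [le_max_right C₀ 0]
  have hC4 : 4 / C ≤ 1 - ε := by
    rw [div_le_iff₀ (h4.trans_le hC)]
    rwa [div_le_iff₀ (sub_pos.2 hε), mul_comm] at hC
  have hsq : (1 - 2 / C) ^ 2 = 1 - 4 / C + (2 / C) ^ 2 := by ring
  nlinarith [sq_nonneg (2 / C)]

theorem dirichlet_energy_almost_level_lower_bound_general
    (ε : ℝ) (hε1 : ε < 1) :
    ∃ C : ℝ, 100 < C ∧
      ∀ (r₀ δ : ℝ), 0 < r₀ → r₀ < 1 → 0 < δ →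
      ∀ u : ℂ → ℝ, ContDiffOn ℝ 1 u (closedBall 0 1 \ ball 0 r₀) →
        (∀ x ∈ sphere (0 : ℂ) r₀, δ * r₀ - δ * r₀ / C < u x) →
        (∀ x ∈ sphere (0 : ℂ) 1, u x < δ * r₀ / C) →
        ε * (2 * π * δ ^ 2 * r₀ ^ 2 / |Real.log r₀|)
          ≤ ∫ x in ball (0 : ℂ) 1 \ ball 0 r₀, ‖fderiv ℝ u x‖ ^ 2 := by
  obtain ⟨C, hC, hεC⟩ := exists_gt_and_le_sq_one_sub_two_div 100 hε1
  refine ⟨C, hC, fun r₀ δ hr₀ hr₁ hδ u hu hin hout => ?_⟩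
  have hgap : δ * r₀ / C ≤ δ * r₀ - δ * r₀ / C := by
    have : 2 * (δ * r₀ / C) ≤ δ * r₀ := by
      rw [mul_div_assoc', div_le_iff₀ (by linarith)]
      nlinarith [mul_pos hδ hr₀]
    linarith
  have henergy := two_pi_mul_sq_div_log_le_integral_norm_fderiv_sq hr₀ hr₁ hu
    (fun x hx => (hin x hx).le) (fun x hx => (hout x hx).le) hgap
  have hL : |Real.log r₀| = Real.log (1 / r₀) := by
    rw [abs_of_neg (Real.log_neg hr₀ hr₁), one_div, Real.log_inv]
  have hdrop : ε * (δ * r₀) ^ 2 ≤ (δ * r₀ - δ * r₀ / C - δ * r₀ / C) ^ 2 := by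
    rw [show δ * r₀ - δ * r₀ / C - δ * r₀ / C = δ * r₀ * (1 - 2 / C) by ring,
      mul_pow (δ * r₀), mul_comm ε]
    exact mul_le_mul_of_nonneg_left hεC (sq_nonneg _)
  have hlog : 0 < Real.log (1 / r₀) := Real.log_pos (one_lt_one_div hr₀ hr₁)
  refine le_trans ?_ henergy
  rw [hL, show ε * (2 * π * δ ^ 2 * r₀ ^ 2 / Real.log (1 / r₀))
    = 2 * π * (ε * (δ * r₀) ^ 2 / Real.log (1 / r₀)) by ring]
  gcongr

/-- For every `0 < ε < 1` there is `C > 100` such that any `C¹` function `u` on the closed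
annulus `closure(B(0,1)) \ B(0,r₀)` with `u > δr₀ − δr₀/C` on the inner circle and
`u < δr₀/C` on the unit circle satisfies `∫ |∇u|² ≥ ε · 2π δ² r₀² / |log r₀|`. -/
theorem dirichlet_energy_almost_level_lower_bound
    (ε : ℝ) (hε0 : 0 < ε) (hε1 : ε < 1) :
    ∃ C : ℝ, 100 < C ∧
      ∀ (r₀ δ : ℝ), 0 < r₀ → r₀ < 1 → 0 < δ →
      ∀ u : ℂ → ℝ, ContDiffOn ℝ 1 u (closedBall 0 1 \ ball 0 r₀) →
        (∀ x ∈ sphere (0 : ℂ) r₀, δ * r₀ - δ * r₀ / C < u x) →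
        (∀ x ∈ sphere (0 : ℂ) 1, u x < δ * r₀ / C) →
        ε * (2 * π * δ ^ 2 * r₀ ^ 2 / |Real.log r₀|)
          ≤ ∫ x in ball (0 : ℂ) 1 \ ball 0 r₀, ‖fderiv ℝ u x‖ ^ 2 :=
  dirichlet_energy_almost_level_lower_bound_general ε hε1
end
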